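/- arXiv:1902.11234 — 2 statements merged into one kernel-verified Lean document; each statement's English description precedes it below -/
import Mathlib

section
/- For every real β > 1 and every point t = (t_1, t_2, ...) of the infinite-dimensional torus 𝕋^ω, the sum of the absolutely convergent series ∑_{n=1}^∞ t^{α(n)}/n^β is nonzero; in fact its modulus is at least ∏_{j=1}^∞ (1 + p_j^{-β})^{-1} > 0. -/
open MeasureTheory Filter Finset

noncomputable section

instance : MeasurableSpace Circle := borel Circle
instance : BorelSpace Circle := ⟨rfl⟩

/-- The infinite-dimensional torus `𝕋^ω`, a countable product of unit circles. -/
abbrev Torus : Type := ℕ → Circle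

/-- `pprime j` is the `j`-th prime (`0`-indexed, so `pprime 0 = 2`). -/
def pprime (j : ℕ) : ℕ := Nat.nth Nat.Prime j

/-- `expOf n j` is `α_j(n)`, the exponent of the `j`-th prime in the factorization of `n`. -/
def expOf (n j : ℕ) : ℕ := n.factorization (pprime j)

/-- `tpow t n = t^{α(n)} = ∏_j t_j^{α_j(n)}`, a finite product. -/
def tpow (t : Torus) (n : ℕ) : ℂ := ∏ᶠ j, ((t j : ℂ) ^ expOf n j)

/-! Writing `f(n) = t^{α(n)} n^{-β}`, the function `f` is completely multiplicative with
`|f(n)| = n^{-β}`, so the Euler product `∑ f(n) = ∏_p (1 - f(p))⁻¹` converges absolutely.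
Each factor has modulus `|1 - f(p)|⁻¹ ≥ (1 + p^{-β})⁻¹`, and `∏_p (1 + p^{-β})` converges
because `∑_p p^{-β} < ∞`, so the product of the lower bounds is positive. -/

lemma Real.multipliable_inv_one_add_of_summable {ι : Type*} {x : ι → ℝ} (hx : ∀ i, 0 ≤ x i)
    (hs : Summable x) : Multipliable fun i => (1 + x i)⁻¹ :=
  (Real.multipliable_one_add_of_summable hs).inv₀ <|
    tprod_one_add_ne_zero_of_summable (fun i => by linarith [hx i]) hs.norm

lemma Real.tprod_inv_one_add_pos {ι : Type*} {x : ι → ℝ} (hx : ∀ i, 0 ≤ x i)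
    (hs : Summable x) : 0 < ∏' i, (1 + x i)⁻¹ := by
  have hne : ∏' i, (1 + x i) ≠ 0 :=
    tprod_one_add_ne_zero_of_summable (fun i => by linarith [hx i]) hs.norm
  have hnonneg : 0 ≤ ∏' i, (1 + x i) := tprod_nonneg fun i => by linarith [hx i]
  rw [(Real.multipliable_one_add_of_summable hs).tprod_inv₀ hne]
  exact inv_pos.mpr (lt_of_le_of_ne hnonneg hne.symm)

lemma Multipliable.tprod_le_tprod_of_nonneg {ι : Type*} {f g : ι → ℝ} (hf₀ : ∀ i, 0 ≤ f i)
    (hfg : ∀ i, f i ≤ g i) (hf : Multipliable f) (hg : Multipliable g) :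
    ∏' i, f i ≤ ∏' i, g i :=
  le_of_tendsto_of_tendsto' hf.hasProd hg.hasProd fun _ =>
    Finset.prod_le_prod (fun i _ => hf₀ i) fun i _ => hfg i

lemma inv_one_add_norm_le_norm_inv_one_sub {F : Type*} [NormedDivisionRing F] {x : F}
    (hx : ‖x‖ < 1) : (1 + ‖x‖)⁻¹ ≤ ‖(1 - x)⁻¹‖ := by
  have hpos : 0 < ‖1 - x‖ := by
    have := norm_sub_norm_le (1 : F) x
    rw [norm_one] at this
    linarith
  have hle : ‖1 - x‖ ≤ 1 + ‖x‖ := by simpa only [norm_one] using norm_sub_le (1 : F) x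
  rw [norm_inv]
  exact inv_anti₀ hpos hle

lemma EulerProduct.tprod_inv_one_add_norm_le_norm_tsum {F : Type*} [NormedField F]
    [CompleteSpace F] {f : ℕ →*₀ F} (hsum : Summable (‖f ·‖)) :
    ∏' p : Nat.Primes, (1 + ‖f p‖)⁻¹ ≤ ‖∑' n, f n‖ := by
  have hprod := eulerProduct_completely_multiplicative_hasProd hsum
  have hprimes : Summable fun p : Nat.Primes => ‖f p‖ := hsum.comp_injective Subtype.val_injective
  rw [← hprod.tprod_eq, hprod.multipliable.norm_tprod]
  refine Multipliable.tprod_le_tprod_of_nonneg (fun p => by positivity) (fun p => ?_)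
    (Real.multipliable_inv_one_add_of_summable (fun p => norm_nonneg _) hprimes)
    hprod.multipliable.norm
  exact inv_one_add_norm_le_norm_inv_one_sub
    (Summable.norm_lt_one (f := (f : ℕ →* F)) hsum.of_norm p.prop.one_lt)

lemma pprime_injective : Function.Injective pprime :=
  Nat.nth_injective Nat.infinite_setOfPred_prime

lemma pprime_prime (j : ℕ) : (pprime j).Prime := Nat.prime_nth_prime j

def pprimeEquiv : ℕ ≃ Nat.Primes :=
  Equiv.ofBijective (fun j => ⟨pprime j, pprime_prime j⟩)
    ⟨fun _ _ h => pprime_injective (congrArg Subtype.val h),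
     fun p => ⟨Nat.count Nat.Prime p, Subtype.ext (Nat.nth_count p.2)⟩⟩

lemma mulSupport_tpow_finite (t : Torus) (n : ℕ) :
    (Function.mulSupport fun j => (t j : ℂ) ^ expOf n j).Finite := by
  refine (n.factorization.support.finite_toSet.preimage pprime_injective.injOn).subset ?_
  intro j hj
  contrapose! hj
  simp only [Set.mem_preimage, Finset.mem_coe, Finsupp.mem_support_iff, not_not] at hj
  simp [expOf, hj]

lemma norm_tpow (t : Torus) (n : ℕ) : ‖tpow t n‖ = 1 := by
  rw [tpow, finprod_eq_prod _ (mulSupport_tpow_finite t n), norm_prod]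
  exact Finset.prod_eq_one fun j _ => by rw [norm_pow, Circle.norm_coe, one_pow]

lemma tpow_one (t : Torus) : tpow t 1 = 1 := by
  simp [tpow, expOf]

lemma tpow_mul (t : Torus) {m n : ℕ} (hm : m ≠ 0) (hn : n ≠ 0) :
    tpow t (m * n) = tpow t m * tpow t n := by
  rw [tpow, tpow, tpow,
    ← finprod_mul_distrib (mulSupport_tpow_finite t m) (mulSupport_tpow_finite t n)]
  refine finprod_congr fun j => ?_
  rw [← pow_add, expOf, expOf, expOf, Nat.factorization_mul hm hn, Finsupp.add_apply]

/-- `n ↦ t^{α(n)} n^{-β}`; `β ≠ 0` is needed for the value at `0` to be `0`, as `0 ^ 0 = 1`. -/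
def tpowCoeff (t : Torus) (β : ℝ) (hβ : β ≠ 0) : ℕ →*₀ ℂ where
  toFun n := tpow t n * (((n : ℝ) ^ (-β) : ℝ) : ℂ)
  map_zero' := by simp [Real.zero_rpow (neg_ne_zero.mpr hβ)]
  map_one' := by simp [tpow_one]
  map_mul' m n := by
    rcases eq_or_ne m 0 with rfl | hm
    · simp [Real.zero_rpow (neg_ne_zero.mpr hβ)]
    rcases eq_or_ne n 0 with rfl | hn
    · simp [Real.zero_rpow (neg_ne_zero.mpr hβ)]
    simp only [tpow_mul t hm hn, Nat.cast_mul]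
    rw [Real.mul_rpow m.cast_nonneg n.cast_nonneg]
    push_cast
    ring

section tpowCoeff

variable (t : Torus) {β : ℝ} (hβ : β ≠ 0)

lemma tpowCoeff_apply (n : ℕ) : tpowCoeff t β hβ n = tpow t n * (((n : ℝ) ^ (-β) : ℝ) : ℂ) :=
  rfl

lemma norm_tpowCoeff (n : ℕ) : ‖tpowCoeff t β hβ n‖ = (n : ℝ) ^ (-β) := by
  rw [tpowCoeff_apply, norm_mul, norm_tpow, one_mul, Complex.norm_real, Real.norm_eq_abs,
    abs_of_nonneg (Real.rpow_nonneg n.cast_nonneg _)]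

lemma tpow_div_rpow_eq_tpowCoeff (n : ℕ) :
    tpow t (n + 1) / (Complex.ofReal (((n : ℝ) + 1) ^ β)) = tpowCoeff t β hβ (n + 1) := by
  rw [tpowCoeff_apply, div_eq_mul_inv, ← Complex.ofReal_inv, ← Real.rpow_neg (by positivity)]
  push_cast
  rfl

end tpowCoeff

/-- For every real `β > 1` and every `t ∈ 𝕋^ω`, the (absolutely convergent) series
`∑_{n=1}^∞ t^{α(n)}/n^β` has nonzero sum; in fact its modulus is at least
`∏_{j=1}^∞ (1 + p_j^{-β})⁻¹ > 0`. -/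
theorem zeta_series_on_torus_ne_zero (β : ℝ) (hβ : 1 < β) (t : Torus) :
    Summable (fun n : ℕ => ‖tpow t (n + 1) / (Complex.ofReal (((n : ℝ) + 1) ^ β))‖) ∧
    (∑' n : ℕ, tpow t (n + 1) / (Complex.ofReal (((n : ℝ) + 1) ^ β))) ≠ 0 ∧
    Multipliable (fun j : ℕ => (1 + (pprime j : ℝ) ^ (-β))⁻¹) ∧
    0 < ∏' j : ℕ, (1 + (pprime j : ℝ) ^ (-β))⁻¹ ∧
    (∏' j : ℕ, (1 + (pprime j : ℝ) ^ (-β))⁻¹)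
      ≤ ‖∑' n : ℕ, tpow t (n + 1) / (Complex.ofReal (((n : ℝ) + 1) ^ β))‖ := by
  have hβ0 : β ≠ 0 := by linarith
  set f := tpowCoeff t β hβ0
  have hsum : Summable (‖f ·‖) := by
    simpa only [f, norm_tpowCoeff] using Real.summable_nat_rpow.mpr (neg_lt_neg hβ)
  have hprimes : Summable fun p : Nat.Primes => ‖f p‖ := hsum.comp_injective Subtype.val_injective
  have hseries : ∑' n : ℕ, tpow t (n + 1) / (Complex.ofReal (((n : ℝ) + 1) ^ β)) = ∑' n, f n := by
    rw [hsum.of_norm.tsum_eq_zero_add, map_zero, zero_add]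
    exact tsum_congr (tpow_div_rpow_eq_tpowCoeff t hβ0)
  have hfactors : (fun j : ℕ => (1 + (pprime j : ℝ) ^ (-β))⁻¹)
      = fun j => (1 + ‖f (pprimeEquiv j)‖)⁻¹ := by
    ext j
    rw [norm_tpowCoeff]
    rfl
  have hmul : Multipliable fun j : ℕ => (1 + (pprime j : ℝ) ^ (-β))⁻¹ := by
    rw [hfactors]
    exact pprimeEquiv.multipliable_iff.mpr
      (Real.multipliable_inv_one_add_of_summable (fun _ => norm_nonneg _) hprimes)
  have hprod : ∏' j : ℕ, (1 + (pprime j : ℝ) ^ (-β))⁻¹ = ∏' p : Nat.Primes, (1 + ‖f p‖)⁻¹ := by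
    rw [hfactors]
    exact pprimeEquiv.tprod_eq fun p => (1 + ‖f p‖)⁻¹
  have hpos : 0 < ∏' j : ℕ, (1 + (pprime j : ℝ) ^ (-β))⁻¹ :=
    hprod ▸ Real.tprod_inv_one_add_pos (fun _ => norm_nonneg _) hprimes
  have hle := hseries ▸ hprod ▸ EulerProduct.tprod_inv_one_add_norm_le_norm_tsum hsum
  refine ⟨?_, fun h => by simp [h] at hle; linarith, hmul, hpos, hle⟩
  exact (hsum.comp_injective Nat.succ_injective).congr fun n =>
    congrArg norm (tpow_div_rpow_eq_tpowCoeff t hβ0 n).symm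

end
end

section
/- For every real β > 2, the function t ↦ (∑_{m=1}^∞ m^{1−β} t^{α(m)}) / (∑_{m=1}^∞ m^{−β} t^{α(m)}) belongs to L¹(𝕋^ω, dt). -/
open MeasureTheory Filter Finset

noncomputable section

/-!
Both series are continuous on the compact torus, since their coefficients are absolutely summable
and `|t^{α(n)}| = 1`. The denominator does not vanish: its constant term is `1`, and the remaining
coefficients sum to `∑_{n ≥ 2} n^{-β} ≤ ζ(2) - 1 = π²/6 - 1 < 1`. So the quotient is continuous on
a compact space, hence integrable for any finite measure.
-/

-- Only the first `n + 1` primes can divide `n`, because `j ≤ pprime j`.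
lemma tpow_eq_prod (t : Torus) (n : ℕ) :
    tpow t n = ∏ j ∈ range (n + 1), (t j : ℂ) ^ expOf n j := by
  apply finprod_eq_prod_of_mulSupport_subset
  intro j hj
  have hexp : expOf n j ≠ 0 := fun h => hj (by simp [h])
  have hn : n ≠ 0 := by
    rintro rfl
    exact hexp (by simp [expOf])
  have hle : pprime j ≤ n :=
    Nat.le_of_dvd (Nat.pos_of_ne_zero hn) (Nat.dvd_of_factorization_pos hexp)
  have hj : j ≤ pprime j := (Nat.nth_strictMono Nat.infinite_setOfPred_prime).le_apply
  simp only [coe_range, Set.mem_Iio]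
  omega

lemma continuous_tpow (n : ℕ) : Continuous fun t : Torus => tpow t n := by
  simp only [tpow_eq_prod]
  exact continuous_finsetProd _ fun j _ =>
    (continuous_subtype_val.comp (continuous_apply j)).pow _

/-- The coefficient of `t^{α(m + 1)}` is `a m`, so that the index `n = 0` never occurs. -/
def torusSeries (a : ℕ → ℂ) (t : Torus) : ℂ := ∑' m, a m * tpow t (m + 1)

section torusSeries

variable {a : ℕ → ℂ}

lemma norm_mul_tpow (z : ℂ) (t : Torus) (n : ℕ) : ‖z * tpow t n‖ = ‖z‖ := by
  rw [norm_mul, norm_tpow, mul_one]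

lemma summable_mul_tpow (ha : Summable fun m => ‖a m‖) (t : Torus) (n : ℕ → ℕ) :
    Summable fun m => a m * tpow t (n m) :=
  Summable.of_norm (by simpa only [norm_mul_tpow] using ha)

lemma norm_tsum_mul_tpow_le (ha : Summable fun m => ‖a m‖) (t : Torus) (n : ℕ → ℕ) :
    ‖∑' m, a m * tpow t (n m)‖ ≤ ∑' m, ‖a m‖ :=
  (norm_tsum_le_tsum_norm (by simpa only [norm_mul_tpow] using ha)).trans_eq
    (tsum_congr fun m => norm_mul_tpow _ t _)

lemma continuous_torusSeries (ha : Summable fun m => ‖a m‖) : Continuous (torusSeries a) :=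
  continuous_tsum (fun m => continuous_const.mul (continuous_tpow (m + 1))) ha
    fun _ t => (norm_mul_tpow _ t _).le

lemma torusSeries_eq_add_tail (ha : Summable fun m => ‖a m‖) (t : Torus) :
    torusSeries a t = a 0 + ∑' m, a (m + 1) * tpow t (m + 1 + 1) := by
  rw [torusSeries, (summable_mul_tpow ha t _).tsum_eq_zero_add, zero_add, tpow_one, mul_one]

lemma sub_tsum_norm_le_norm_torusSeries (ha : Summable fun m => ‖a m‖) (t : Torus) :
    ‖a 0‖ - ∑' m, ‖a (m + 1)‖ ≤ ‖torusSeries a t‖ := by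
  rw [torusSeries_eq_add_tail ha t]
  calc ‖a 0‖ - ∑' m, ‖a (m + 1)‖
      ≤ ‖a 0‖ - ‖∑' m, a (m + 1) * tpow t (m + 1 + 1)‖ :=
        sub_le_sub_left (norm_tsum_mul_tpow_le ((summable_nat_add_iff 1).mpr ha) t _) _
    _ ≤ ‖a 0 + ∑' m, a (m + 1) * tpow t (m + 1 + 1)‖ := norm_sub_le_norm_add _ _

lemma torusSeries_ne_zero (ha : Summable fun m => ‖a m‖) (hdom : ∑' m, ‖a (m + 1)‖ < ‖a 0‖)
    (t : Torus) : torusSeries a t ≠ 0 := by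
  intro h
  have := sub_tsum_norm_le_norm_torusSeries ha t
  rw [h, norm_zero] at this
  linarith

theorem integrable_torusSeries_div {b : ℕ → ℂ} (ν : Measure Torus) [IsFiniteMeasure ν]
    (ha : Summable fun m => ‖a m‖) (hb : Summable fun m => ‖b m‖)
    (hdom : ∑' m, ‖b (m + 1)‖ < ‖b 0‖) :
    Integrable (fun t => torusSeries a t / torusSeries b t) ν :=
  ((continuous_torusSeries ha).div (continuous_torusSeries hb)
    (torusSeries_ne_zero hb hdom)).integrable_of_hasCompactSupport
    (HasCompactSupport.of_compactSpace _)

end torusSeries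

lemma summable_norm_rpow_neg {s : ℝ} (hs : 1 < s) :
    Summable fun m : ℕ => ‖((((m : ℝ) + 1) ^ (-s) : ℝ) : ℂ)‖ := by
  have := (summable_nat_add_iff 1).mpr (Real.summable_nat_rpow.mpr (neg_lt_neg hs))
  refine this.congr fun m => ?_
  rw [Complex.norm_real, Real.norm_of_nonneg (by positivity)]
  push_cast
  rfl

lemma tsum_rpow_neg_add_two_lt_one {s : ℝ} (hs : 2 ≤ s) :
    ∑' m : ℕ, ((m : ℝ) + 2) ^ (-s) < 1 := by
  have hzeta_tail : HasSum (fun m : ℕ => (((m : ℝ) + 2) ^ 2)⁻¹) (Real.pi ^ 2 / 6 - 1) := by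
    have := (hasSum_nat_add_iff' 2).mpr hasSum_zeta_two
    norm_num [Finset.sum_range_succ] at this
    exact this
  have hle : ∀ m : ℕ, ((m : ℝ) + 2) ^ (-s) ≤ (((m : ℝ) + 2) ^ 2)⁻¹ := fun m => by
    rw [← Real.rpow_two, ← Real.rpow_neg (by positivity)]
    exact Real.rpow_le_rpow_of_exponent_le (by linarith [m.cast_nonneg (α := ℝ)]) (by linarith)
  have hsummable : Summable fun m : ℕ => ((m : ℝ) + 2) ^ (-s) :=
    .of_nonneg_of_le (fun m => by positivity) hle hzeta_tail.summable
  calc ∑' m : ℕ, ((m : ℝ) + 2) ^ (-s) ≤ Real.pi ^ 2 / 6 - 1 :=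
        hasSum_le hle hsummable.hasSum hzeta_tail
    _ < 1 := by nlinarith [Real.pi_lt_d2, Real.pi_pos]

theorem totient_transform_integrable_general (β : ℝ) (hβ : 2 < β)
    (ν : Measure Torus) [IsProbabilityMeasure ν] :
    Integrable (fun t : Torus =>
      (∑' m : ℕ, Complex.ofReal (((m : ℝ) + 1) ^ (1 - β)) * tpow t (m + 1)) /
        (∑' m : ℕ, Complex.ofReal (((m : ℝ) + 1) ^ (-β)) * tpow t (m + 1))) ν := by
  refine integrable_torusSeries_div ν ?_ (summable_norm_rpow_neg (by linarith)) ?_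
  · simpa only [neg_sub] using summable_norm_rpow_neg (s := β - 1) (by linarith)
  · calc ∑' m : ℕ, ‖(((((m + 1 : ℕ) : ℝ) + 1) ^ (-β) : ℝ) : ℂ)‖
          = ∑' m : ℕ, ((m : ℝ) + 2) ^ (-β) := tsum_congr fun m => by
            rw [Complex.norm_real, Real.norm_of_nonneg (by positivity)]
            push_cast
            ring_nf
      _ < 1 := tsum_rpow_neg_add_two_lt_one hβ.le
      _ = ‖(((((0 : ℕ) : ℝ) + 1) ^ (-β) : ℝ) : ℂ)‖ := by simp

/-- For every real `β > 2`, the function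
`t ↦ (∑_{m=1}^∞ m^{1-β} t^{α(m)}) / (∑_{m=1}^∞ m^{-β} t^{α(m)})` belongs to
`L¹(𝕋^ω, dt)`, where `dt` is the normalized Haar measure on `𝕋^ω`. -/
theorem totient_transform_integrable (β : ℝ) (hβ : 2 < β)
    (ν : Measure Torus) [ν.IsHaarMeasure] [IsProbabilityMeasure ν] :
    Integrable (fun t : Torus =>
      (∑' m : ℕ, Complex.ofReal (((m : ℝ) + 1) ^ (1 - β)) * tpow t (m + 1)) /
        (∑' m : ℕ, Complex.ofReal (((m : ℝ) + 1) ^ (-β)) * tpow t (m + 1))) ν :=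
  totient_transform_integrable_general β hβ ν
end
end
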